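/- arXiv:2409.19221 — 5 statements merged into one kernel-verified Lean document; each statement's English description precedes it below -/
import Mathlib

section
/- Real one-variable Cauchy approximation: Let f : ℝ → ℝ be real-analytic on an open set Ω ⊆ ℝ and let K ⊆ Ω be compact. Then for every ε > 0 there exist a natural number m ≥ 1, complex numbers ξ_1, …, ξ_m ∈ ℂ each with strictly positive imaginary part, and complex parameters λ_1, …, λ_m ∈ ℂ such that for every x ∈ K, |f(x) − Re(∑_{k=1}^m λ_k / (ξ_k − x))| < ε. -/
/-!
Stone–Weierstrass. On a compact `K ⊆ ℝ` the closure of the real span of the kernels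
`x ↦ Re (c / (ξ - x))`, `ξ` in the upper half-plane, is a subalgebra of `C(K, ℝ)`:
* it contains `1 = lim_{s → 0⁺} Re ((i/s) / (i/s - x))`;
* it is closed under products, since `2 Re z Re w = Re (z w) + Re (z w̄)` and both products
  split into partial fractions with poles `ξ, η` resp. `ξ, η̄`, and a pole `η̄` in the lower
  half-plane is reflected to `η` by taking the conjugate under `Re`; when `ξ = η`, the product
  is the limit of products with distinct poles;
* it separates points, as `Re (1 / (a + i - x))` vanishes only at `x = a`.
-/

open Complex ComplexConjugate Pointwise
open scoped UpperHalfPlane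

lemma div_sub_mul_div_sub {a b x : ℂ} (ha : a - x ≠ 0) (hb : b - x ≠ 0) (hab : b - a ≠ 0)
    (c d : ℂ) :
    c / (a - x) * (d / (b - x)) = c * d / (b - a) / (a - x) - c * d / (b - a) / (b - x) := by
  field_simp
  ring

lemma two_mul_re_mul_re (z w : ℂ) : 2 * (z.re * w.re) = (z * w).re + (z * conj w).re := by
  simp only [mul_re, conj_re, conj_im]
  ring

lemma re_div_conj_sub_ofReal (c η : ℂ) (x : ℝ) :
    (c / (conj η - x)).re = (conj c / (η - x)).re := by
  rw [← conj_re, map_div₀, map_sub, conj_conj, conj_ofReal]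

namespace UpperHalfPlane

lemma coe_sub_ofReal_ne_zero (ξ : ℍ) (x : ℝ) : (ξ : ℂ) - x ≠ 0 :=
  sub_ne_zero.mpr (ξ.ne_ofReal x)

lemma conj_coe_sub_ofReal_ne_zero (ξ : ℍ) (x : ℝ) : conj (ξ : ℂ) - x ≠ 0 := by
  rw [← conj_ofReal, ← map_sub, map_ne_zero]
  exact ξ.coe_sub_ofReal_ne_zero x

lemma continuous_vadd (ξ : ℍ) : Continuous fun t : ℝ => t +ᵥ ξ :=
  isEmbedding_coe.continuous_iff.mpr <| by
    simp only [Function.comp_def, coe_vadd]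
    fun_prop

end UpperHalfPlane

section CauchyKernel

variable (K : Set ℝ)

noncomputable def cauchyKernel (ξ : ℍ) (c : ℂ) : C(K, ℝ) :=
  ⟨fun x => (c / (ξ - (x : ℝ))).re, by
    have := fun x : K => ξ.coe_sub_ofReal_ne_zero x
    fun_prop (disch := assumption)⟩

@[simp]
lemma cauchyKernel_apply (ξ : ℍ) (c : ℂ) (x : K) :
    cauchyKernel K ξ c x = (c / (ξ - (x : ℝ))).re :=
  rfl

lemma continuous_cauchyKernel (c : ℂ) : Continuous fun ξ : ℍ => cauchyKernel K ξ c :=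
  ContinuousMap.continuous_of_continuous_uncurry _ <| by
    have := fun p : ℍ × K => p.1.coe_sub_ofReal_ne_zero p.2
    simp only [Function.uncurry_def, cauchyKernel_apply]
    fun_prop (disch := assumption)

noncomputable def cauchySpan : Submodule ℝ C(K, ℝ) :=
  Submodule.span ℝ (Set.range (Function.uncurry (cauchyKernel K)))

lemma cauchyKernel_mem_cauchySpan (ξ : ℍ) (c : ℂ) : cauchyKernel K ξ c ∈ cauchySpan K :=
  Submodule.subset_span ⟨(ξ, c), rfl⟩

lemma cauchyKernel_mul_cauchyKernel {ξ η : ℍ} (hξη : ξ ≠ η) (c d : ℂ) :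
    cauchyKernel K ξ c * cauchyKernel K η d =
      (1 / 2 : ℝ) • (cauchyKernel K ξ (c * d / (η - ξ)) - cauchyKernel K η (c * d / (η - ξ)) +
        cauchyKernel K ξ (c * conj d / (conj (η : ℂ) - ξ)) -
        cauchyKernel K η (conj (c * conj d / (conj (η : ℂ) - ξ)))) := by
  have hη : (η : ℂ) - ξ ≠ 0 := sub_ne_zero.mpr (UpperHalfPlane.coe_injective.ne hξη.symm)
  have hηbar : conj (η : ℂ) - ξ ≠ 0 := fun h => by
    have := congrArg im h
    simp only [sub_im, conj_im, UpperHalfPlane.coe_im, zero_im] at this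
    linarith [ξ.im_pos, η.im_pos]
  ext x
  have hconj : conj (d / (η - (x : ℝ))) = conj d / (conj (η : ℂ) - (x : ℝ)) := by
    rw [map_div₀, map_sub, conj_ofReal]
  have := two_mul_re_mul_re (c / (ξ - (x : ℝ))) (d / (η - (x : ℝ)))
  rw [hconj, div_sub_mul_div_sub (ξ.coe_sub_ofReal_ne_zero x) (η.coe_sub_ofReal_ne_zero x) hη,
    div_sub_mul_div_sub (ξ.coe_sub_ofReal_ne_zero x) (η.conj_coe_sub_ofReal_ne_zero x) hηbar,
    sub_re, sub_re, re_div_conj_sub_ofReal] at this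
  simp only [ContinuousMap.mul_apply, ContinuousMap.smul_apply, ContinuousMap.add_apply,
    ContinuousMap.sub_apply, cauchyKernel_apply, smul_eq_mul]
  linarith

lemma cauchyKernel_mul_mem_cauchySpan {ξ η : ℍ} (hξη : ξ ≠ η) (c d : ℂ) :
    cauchyKernel K ξ c * cauchyKernel K η d ∈ cauchySpan K := by
  rw [cauchyKernel_mul_cauchyKernel K hξη]
  refine Submodule.smul_mem _ _ (sub_mem (add_mem (sub_mem ?_ ?_) ?_) ?_) <;>
    exact cauchyKernel_mem_cauchySpan K _ _

lemma cauchyKernel_mul_mem_closure [LocallyCompactSpace K] (ξ η : ℍ) (c d : ℂ) :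
    cauchyKernel K ξ c * cauchyKernel K η d ∈ closure (cauchySpan K : Set C(K, ℝ)) := by
  rcases ne_or_eq ξ η with hξη | rfl
  · exact subset_closure (cauchyKernel_mul_mem_cauchySpan K hξη c d)
  have hcont : Continuous fun t : ℝ => cauchyKernel K ξ c * cauchyKernel K (t +ᵥ ξ) d :=
    continuous_const.mul ((continuous_cauchyKernel K d).comp ξ.continuous_vadd)
  have hlim := (hcont.tendsto 0).mono_left (nhdsWithin_le_nhds (s := {0}ᶜ))
  rw [zero_vadd] at hlim
  refine mem_closure_of_tendsto hlim (eventually_nhdsWithin_of_forall fun t ht => ?_)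
  refine cauchyKernel_mul_mem_cauchySpan K (fun h => ht ?_) c d
  simpa using congrArg UpperHalfPlane.re h

lemma mul_mem_closure_cauchySpan [LocallyCompactSpace K] {g h : C(K, ℝ)}
    (hg : g ∈ closure (cauchySpan K : Set C(K, ℝ)))
    (hh : h ∈ closure (cauchySpan K : Set C(K, ℝ))) :
    g * h ∈ closure (cauchySpan K : Set C(K, ℝ)) := by
  rw [← closure_closure (s := (cauchySpan K : Set C(K, ℝ)))]
  refine map_mem_closure₂ continuous_mul hg hh fun a ha b hb => ?_
  have hab : a * b ∈ cauchySpan K * cauchySpan K := Submodule.mul_mem_mul ha hb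
  rw [cauchySpan, Submodule.span_mul_span] at hab
  refine Submodule.span_le (p := (cauchySpan K).topologicalClosure).mpr ?_ hab
  rintro _ ⟨_, ⟨⟨ξ, c⟩, rfl⟩, _, ⟨⟨η, d⟩, rfl⟩, rfl⟩
  exact cauchyKernel_mul_mem_closure K ξ η c d

lemma one_mem_closure_cauchySpan : (1 : C(K, ℝ)) ∈ closure (cauchySpan K : Set C(K, ℝ)) := by
  have hne : ∀ p : ℝ × K, 1 + p.1 * (p.2 : ℝ) * I ≠ 0 := fun p h => by
    simpa using congrArg re h
  -- for `s ≠ 0`, `1 / (1 + s x i)` is the kernel with pole and coefficient `i / s`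
  let F : C(ℝ × K, ℝ) := ⟨fun p => (1 / (1 + p.1 * (p.2 : ℝ) * I)).re, by
    fun_prop (disch := exact hne _)⟩
  have hF0 : F.curry 0 = 1 := by
    ext x
    simp [F]
  have hF : ∀ s : ℝ, 0 < s → F.curry s ∈ cauchySpan K := fun s hs => by
    have him : 0 < (I / s).im := by simpa using hs
    convert cauchyKernel_mem_cauchySpan K ⟨I / s, him⟩ (I / s) using 1
    ext x
    have hs' : (s : ℂ) ≠ 0 := by exact_mod_cast hs.ne'
    have hden : I - s * (x : ℝ) ≠ 0 := fun h => by simpa using congrArg im h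
    simp only [ContinuousMap.curry_apply, ContinuousMap.coe_mk, cauchyKernel_apply, F]
    congr 1
    field_simp
    rw [div_eq_iff (hne (s, x))]
    linear_combination (-(s : ℂ) * (x : ℝ)) * I_sq
  have hlim := (F.curry.continuous.tendsto 0).mono_left (nhdsWithin_le_nhds (s := Set.Ioi 0))
  rw [hF0] at hlim
  exact mem_closure_of_tendsto hlim (eventually_nhdsWithin_of_forall hF)

lemma cauchyKernel_vadd_I_one_apply (a : ℝ) (x : K) :
    cauchyKernel K (a +ᵥ UpperHalfPlane.I) 1 x = (a - x) / ((a - x) ^ 2 + 1) := by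
  have : (a +ᵥ UpperHalfPlane.I : ℂ) - (x : ℝ) = ((a - x : ℝ) : ℂ) + I := by
    rw [UpperHalfPlane.coe_vadd, UpperHalfPlane.coe_I]
    push_cast
    ring
  rw [cauchyKernel_apply, this]
  simp [normSq_apply, sq]

lemma separatesPoints_of_cauchySpan_le {A : Subalgebra ℝ C(K, ℝ)}
    (hA : (cauchySpan K : Set C(K, ℝ)) ⊆ A) : A.SeparatesPoints := by
  intro x y hxy
  have hxy' : (x : ℝ) - y ≠ 0 := sub_ne_zero.mpr (Subtype.coe_injective.ne hxy)
  refine ⟨_, ⟨_, hA (cauchyKernel_mem_cauchySpan K ((x : ℝ) +ᵥ UpperHalfPlane.I) 1), rfl⟩, ?_⟩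
  simp only [cauchyKernel_vadd_I_one_apply, sub_self, zero_div]
  exact (div_ne_zero hxy' (by positivity)).symm

lemma dense_cauchySpan [CompactSpace K] : Dense (cauchySpan K : Set C(K, ℝ)) := by
  let A : Subalgebra ℝ C(K, ℝ) := (cauchySpan K).topologicalClosure.toSubalgebra
    (one_mem_closure_cauchySpan K) fun _ _ => mul_mem_closure_cauchySpan K
  have hA := ContinuousMap.subalgebra_topologicalClosure_eq_top_of_separatesPoints A
    (separatesPoints_of_cauchySpan_le K subset_closure)
  have hA' := congrArg ((↑) : Subalgebra ℝ C(K, ℝ) → Set C(K, ℝ)) hA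
  rw [Subalgebra.topologicalClosure_coe, Algebra.coe_top] at hA'
  rw [dense_iff_closure_eq, ← closure_closure]
  exact hA'

lemma exists_sum_eq_of_mem_cauchySpan {g : C(K, ℝ)} (hg : g ∈ cauchySpan K) :
    ∃ m : ℕ, 1 ≤ m ∧ ∃ (ξ : Fin m → ℍ) (c : Fin m → ℂ),
      ∀ x : K, g x = (∑ k, c k / (ξ k - (x : ℝ))).re := by
  obtain ⟨n, r, g, rfl⟩ := Submodule.mem_span_set'.mp hg
  choose p hp using fun i => (g i).2
  -- a vanishing term makes the sum nonempty
  refine ⟨n + 1, by omega, Fin.cons UpperHalfPlane.I fun i => (p i).1,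
    Fin.cons 0 fun i => r i * (p i).2, fun x => ?_⟩
  simp [Fin.sum_univ_succ, ← hp, Function.uncurry_def, re_sum, mul_div_assoc]

end CauchyKernel

theorem real_cauchy_approximation_one_variable_general
    (Ω : Set ℝ)
    (f : ℝ → ℝ) (hf : AnalyticOnNhd ℝ f Ω)
    (K : Set ℝ) (hK : IsCompact K) (hKΩ : K ⊆ Ω) :
    ∀ ε > 0, ∃ m : ℕ, 1 ≤ m ∧
      ∃ (ξ : Fin m → ℂ) (lam : Fin m → ℂ),
        (∀ k, 0 < (ξ k).im) ∧
        ∀ x ∈ K, |f x - (∑ k, lam k / (ξ k - (x : ℂ))).re| < ε := by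
  intro ε hε
  have : CompactSpace K := isCompact_iff_compactSpace.mp hK
  let F : C(K, ℝ) := ⟨K.domRestrict f, (hf.continuousOn.mono hKΩ).domRestrict⟩
  obtain ⟨g, hg, hFg⟩ := Metric.mem_closure_iff.mp (dense_cauchySpan K F) ε hε
  obtain ⟨m, hm, ξ, c, hgx⟩ := exists_sum_eq_of_mem_cauchySpan K hg
  refine ⟨m, hm, fun k => ξ k, c, fun k => (ξ k).coe_im_pos, fun x hx => ?_⟩
  calc |f x - _| = dist (F ⟨x, hx⟩) (g ⟨x, hx⟩) := by rw [hgx]; rfl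
    _ ≤ dist F g := ContinuousMap.dist_apply_le_dist _
    _ < ε := hFg

/-- **Real one-variable Cauchy approximation.** A function real-analytic on
an open `Ω ⊆ ℝ` can be uniformly approximated on a compact `K ⊆ Ω` by the
real part of finite combinations of one-variable Cauchy kernels with poles
in the upper half-plane. -/
theorem real_cauchy_approximation_one_variable
    (Ω : Set ℝ) (hΩ : IsOpen Ω)
    (f : ℝ → ℝ) (hf : AnalyticOnNhd ℝ f Ω)
    (K : Set ℝ) (hK : IsCompact K) (hKΩ : K ⊆ Ω) :
    ∀ ε > 0, ∃ m : ℕ, 1 ≤ m ∧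
      ∃ (ξ : Fin m → ℂ) (lam : Fin m → ℂ),
        (∀ k, 0 < (ξ k).im) ∧
        ∀ x ∈ K, |f x - (∑ k, lam k / (ξ k - (x : ℂ))).re| < ε :=
  real_cauchy_approximation_one_variable_general Ω f hf K hK hKΩ
end

section
/- General Approximation Theorem: Let Φ be a family of continuous functions ℝ → ℝ with the universal approximation property on ℝ, i.e., for every compact interval I ⊆ ℝ, every continuous g : I → ℝ, and every ε > 0, there are finitely many functions φ_1, …, φ_r ∈ Φ and real coefficients c_1, …, c_r with sup_{t ∈ I} |g(t) − ∑_{i=1}^r c_i φ_i(t)| < ε. Define Φ^N = { x ↦ φ(a_1 x_1 + a_2 x_2 + ⋯ + a_N x_N) : (a_1, …, a_N) ∈ ℝ^N, φ ∈ Φ }. Then Φ^N has the universal approximation property on ℝ^N: for every compact set K ⊆ ℝ^N, every continuous function g : K → ℝ, and every ε > 0, there exist finitely many functions ψ_1, …, ψ_s ∈ Φ^N and real coefficients c_1, …, c_s with sup_{x ∈ K} |g(x) − ∑_{i=1}^s c_i ψ_i(x)| < ε. -/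
/-!
Since `exp (a ⬝ x) * exp (b ⬝ x) = exp ((a + b) ⬝ x)`, the linear span of the ridge exponentials
`x ↦ exp (a ⬝ x)` is a subalgebra of `C(K, ℝ)`; it separates points, so by Stone–Weierstrass it is
dense. Each `exp (a ⬝ x)` is itself uniformly approximable on `K` by combinations of
`φ (a ⬝ x)`, `φ ∈ Φ`, because `a ⬝ x` stays in a compact interval for `x ∈ K`, and the functions
approximable in this way form a uniformly closed linear subspace.
-/

/-- A family `Φ` of functions `ℝ → ℝ` has the universal approximation
property on `ℝ`: every continuous function on a compact interval can be
uniformly approximated by finite real linear combinations of members of `Φ`. -/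
def HasUAP (Φ : Set (ℝ → ℝ)) : Prop :=
  ∀ (a b : ℝ) (g : ℝ → ℝ), ContinuousOn g (Set.Icc a b) → ∀ ε > 0,
    ∃ (r : ℕ) (φ : Fin r → ℝ → ℝ) (c : Fin r → ℝ),
      (∀ i, φ i ∈ Φ) ∧ ∀ t ∈ Set.Icc a b, |g t - ∑ i, c i * φ i t| < ε

open Set Finset

variable {ι : Type*} [Fintype ι]

noncomputable def ridgeExp (K : Set (ι → ℝ)) (a : ι → ℝ) : C(K, ℝ) :=
  ⟨fun x => Real.exp (∑ j, a j * (x : ι → ℝ) j), Real.continuous_exp.comp <|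
    continuous_finsetSum _ fun j _ => continuous_const.mul <|
      (continuous_apply j).comp continuous_subtype_val⟩

@[simp]
theorem ridgeExp_apply (K : Set (ι → ℝ)) (a : ι → ℝ) (x : K) :
    ridgeExp K a x = Real.exp (∑ j, a j * (x : ι → ℝ) j) :=
  rfl

def ridgeExpSubmonoid (K : Set (ι → ℝ)) : Submonoid C(K, ℝ) where
  carrier := range (ridgeExp K)
  mul_mem' := by
    rintro _ _ ⟨a, rfl⟩ ⟨b, rfl⟩
    exact ⟨a + b, ContinuousMap.ext fun x => by
      simp [add_mul, sum_add_distrib, Real.exp_add]⟩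
  one_mem' := ⟨0, ContinuousMap.ext fun x => by simp⟩

theorem separatesPoints_adjoin_ridgeExp (K : Set (ι → ℝ)) :
    (Algebra.adjoin ℝ (range (ridgeExp K))).SeparatesPoints := by
  classical
  intro x y hxy
  obtain ⟨j, hj⟩ := Function.ne_iff.mp (Subtype.coe_ne_coe.mpr hxy)
  refine ⟨_, ⟨_, Algebra.subset_adjoin ⟨Pi.single j 1, rfl⟩, rfl⟩, ?_⟩
  simpa [Pi.single_apply] using hj

theorem adjoin_ridgeExp_eq_span (K : Set (ι → ℝ)) :
    Subalgebra.toSubmodule (Algebra.adjoin ℝ (range (ridgeExp K))) =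
      Submodule.span ℝ (range (ridgeExp K)) := by
  have := Algebra.adjoin_eq_span ℝ (ridgeExpSubmonoid K : Set C(K, ℝ))
  rwa [Submonoid.closure_eq] at this

theorem exists_sum_exp_near {K : Set (ι → ℝ)} (hK : IsCompact K) {g : (ι → ℝ) → ℝ}
    (hg : ContinuousOn g K) {ε : ℝ} (hε : 0 < ε) :
    ∃ (r : ℕ) (a : Fin r → ι → ℝ) (c : Fin r → ℝ),
      ∀ x ∈ K, |g x - ∑ i, c i * Real.exp (∑ j, a i j * x j)| < ε := by
  have : CompactSpace K := isCompact_iff_compactSpace.mp hK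
  obtain ⟨⟨f, hf⟩, hnear⟩ := ContinuousMap.exists_mem_subalgebra_near_continuous_of_separatesPoints
    _ (separatesPoints_adjoin_ridgeExp K) _ hg.domRestrict ε hε
  rw [← Subalgebra.mem_toSubmodule, adjoin_ridgeExp_eq_span] at hf
  obtain ⟨r, c, e, rfl⟩ := Submodule.mem_span_set'.mp hf
  choose a ha using fun i => (e i).2
  refine ⟨r, a, c, fun x hx => ?_⟩
  rw [abs_sub_comm]
  simpa [← ha] using hnear ⟨x, hx⟩

def IsRidgeApproximable (Φ : Set (ℝ → ℝ)) (K : Set (ι → ℝ)) (f : (ι → ℝ) → ℝ) : Prop :=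
  ∀ ε > 0, ∃ (s : ℕ) (φ : Fin s → ℝ → ℝ) (a : Fin s → ι → ℝ) (c : Fin s → ℝ),
    (∀ i, φ i ∈ Φ) ∧ ∀ x ∈ K, |f x - ∑ i, c i * φ i (∑ j, a i j * x j)| < ε

namespace IsRidgeApproximable

variable {Φ : Set (ℝ → ℝ)} {K : Set (ι → ℝ)} {f g : (ι → ℝ) → ℝ}

theorem zero : IsRidgeApproximable Φ K 0 :=
  fun ε hε => ⟨0, Fin.elim0, Fin.elim0, Fin.elim0, fun i => i.elim0, fun x _ => by simpa using hε⟩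

theorem add (hf : IsRidgeApproximable Φ K f) (hg : IsRidgeApproximable Φ K g) :
    IsRidgeApproximable Φ K (f + g) := by
  intro ε hε
  obtain ⟨s, φ, a, c, hφ, hf⟩ := hf (ε / 2) (half_pos hε)
  obtain ⟨s', φ', a', c', hφ', hg⟩ := hg (ε / 2) (half_pos hε)
  refine ⟨s + s', Fin.append φ φ', Fin.append a a', Fin.append c c',
    Fin.addCases (by simpa using hφ) (by simpa using hφ'), fun x hx => ?_⟩
  calc |(f + g) x - ∑ i, Fin.append c c' i * Fin.append φ φ' i (∑ j, Fin.append a a' i j * x j)|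
      = |(f x - ∑ i, c i * φ i (∑ j, a i j * x j)) +
          (g x - ∑ i, c' i * φ' i (∑ j, a' i j * x j))| := by
        rw [Fin.sum_univ_add]
        simp only [Fin.append_left, Fin.append_right, Pi.add_apply]
        ring_nf
    _ ≤ _ := abs_add_le _ _
    _ < ε / 2 + ε / 2 := add_lt_add (hf x hx) (hg x hx)
    _ = ε := add_halves ε

theorem const_mul (b : ℝ) (hf : IsRidgeApproximable Φ K f) :
    IsRidgeApproximable Φ K (fun x => b * f x) := by
  intro ε hε
  obtain ⟨s, φ, a, c, hφ, hf⟩ := hf (ε / (|b| + 1)) (by positivity)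
  refine ⟨s, φ, a, fun i => b * c i, hφ, fun x hx => ?_⟩
  calc |b * f x - ∑ i, b * c i * φ i (∑ j, a i j * x j)|
      = |b| * |f x - ∑ i, c i * φ i (∑ j, a i j * x j)| := by
        simp only [mul_assoc, ← mul_sum, ← mul_sub, abs_mul]
    _ ≤ |b| * (ε / (|b| + 1)) := by gcongr; exact (hf x hx).le
    _ < ε := by
        rw [mul_div_assoc', div_lt_iff₀ (by positivity)]
        nlinarith [abs_nonneg b]

theorem sum {α : Type*} (s : Finset α) {f : α → (ι → ℝ) → ℝ}
    (hf : ∀ i ∈ s, IsRidgeApproximable Φ K (f i)) :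
    IsRidgeApproximable Φ K (fun x => ∑ i ∈ s, f i x) := by
  simpa only [sum_fn] using sum_induction f (IsRidgeApproximable Φ K)
    (fun _ _ => add) zero hf

theorem of_forall_near (h : ∀ ε > 0, ∃ f, IsRidgeApproximable Φ K f ∧ ∀ x ∈ K, |g x - f x| < ε) :
    IsRidgeApproximable Φ K g := by
  intro ε hε
  obtain ⟨f, hf, hgf⟩ := h (ε / 2) (half_pos hε)
  obtain ⟨s, φ, a, c, hφ, hf⟩ := hf (ε / 2) (half_pos hε)
  refine ⟨s, φ, a, c, hφ, fun x hx => ?_⟩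
  calc _ ≤ |g x - f x| + |f x - ∑ i, c i * φ i (∑ j, a i j * x j)| := abs_sub_le _ _ _
    _ < ε / 2 + ε / 2 := add_lt_add (hgf x hx) (hf x hx)
    _ = ε := add_halves ε

end IsRidgeApproximable

theorem HasUAP.isRidgeApproximable_comp {Φ : Set (ℝ → ℝ)} (hΦ : HasUAP Φ) {K : Set (ι → ℝ)}
    (hK : IsCompact K) {h : ℝ → ℝ} (hh : Continuous h) (a : ι → ℝ) :
    IsRidgeApproximable Φ K (fun x => h (∑ j, a j * x j)) := by
  intro ε hε
  obtain ⟨M, hM⟩ := hK.exists_bound_of_continuousOn (f := fun x : ι → ℝ => ∑ j, a j * x j)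
    (by fun_prop)
  obtain ⟨m, φ, d, hφ, happrox⟩ := hΦ (-M) M h hh.continuousOn ε hε
  exact ⟨m, φ, fun _ => a, d, hφ, fun x hx => happrox _ (abs_le.mp (hM x hx))⟩

theorem general_approximation_theorem_general (N : ℕ) (Φ : Set (ℝ → ℝ))
    (hΦ : HasUAP Φ)
    (K : Set (Fin N → ℝ)) (hK : IsCompact K)
    (g : (Fin N → ℝ) → ℝ) (hg : ContinuousOn g K) :
    ∀ ε > 0, ∃ (s : ℕ) (φ : Fin s → ℝ → ℝ) (a : Fin s → Fin N → ℝ) (c : Fin s → ℝ),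
      (∀ i, φ i ∈ Φ) ∧
      ∀ x ∈ K, |g x - ∑ i, c i * φ i (∑ j, a i j * x j)| < ε := by
  refine IsRidgeApproximable.of_forall_near fun ε hε => ?_
  obtain ⟨r, a, c, hnear⟩ := exists_sum_exp_near hK hg hε
  exact ⟨_, IsRidgeApproximable.sum Finset.univ fun i _ =>
    (hΦ.isRidgeApproximable_comp hK Real.continuous_exp (a i)).const_mul (c i), hnear⟩

/-- **General Approximation Theorem.** If `Φ ⊆ C(ℝ, ℝ)` has the universal
approximation property on `ℝ`, then the family
`Φ^N = {x ↦ φ(a·x) : a ∈ ℝ^N, φ ∈ Φ}` has the universal approximation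
property on `ℝ^N`. -/
theorem general_approximation_theorem (N : ℕ) (Φ : Set (ℝ → ℝ))
    (hcont : ∀ φ ∈ Φ, Continuous φ) (hΦ : HasUAP Φ)
    (K : Set (Fin N → ℝ)) (hK : IsCompact K)
    (g : (Fin N → ℝ) → ℝ) (hg : ContinuousOn g K) :
    ∀ ε > 0, ∃ (s : ℕ) (φ : Fin s → ℝ → ℝ) (a : Fin s → Fin N → ℝ) (c : Fin s → ℝ),
      (∀ i, φ i ∈ Φ) ∧
      ∀ x ∈ K, |g x - ∑ i, c i * φ i (∑ j, a i j * x j)| < ε :=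
  general_approximation_theorem_general N Φ hΦ K hK g hg
end

section
/- Monomials as combinations of powers of linear forms: For every positive integer N, every natural number k, and every multi-index (k_1, …, k_N) of natural numbers with k_1 + k_2 + ⋯ + k_N = k, the monomial function x ↦ x_1^{k_1} x_2^{k_2} ⋯ x_N^{k_N} on ℝ^N lies in the real linear span of the functions x ↦ (a_1 x_1 + a_2 x_2 + ⋯ + a_N x_N)^k as (a_1, …, a_N) ranges over ℝ^N. -/
open Finset


lemma aux_superset_sum (k : ℕ) (T : Finset (Fin k)) :
    ∑ S ∈ (univ : Finset (Fin k)).powerset,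
        (if T ⊆ S then ((-1 : ℝ)) ^ (k - S.card) else 0)
      = if T = univ then 1 else 0 := by
  have hbij : Function.Bijective (fun S : Finset (Fin k) => Sᶜ) :=
    Function.Involutive.bijective (fun S => compl_compl S)
  rw [Finset.powerset_univ]
  rw [← Fintype.sum_bijective _ hbij _ _ (fun U => rfl)]
  have h2 : ∀ U : Finset (Fin k), k - Uᶜ.card = U.card := by
    intro U
    have h := Finset.card_le_univ U
    rw [Finset.card_compl]
    simp only [Fintype.card_fin] at *
    omega
  calc ∑ U : Finset (Fin k), (if T ⊆ Uᶜ then ((-1:ℝ)) ^ (k - Uᶜ.card) else 0)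
      = ∑ U : Finset (Fin k), (if U ⊆ Tᶜ then ((-1:ℝ)) ^ U.card else 0) := by
        refine Finset.sum_congr rfl fun U _ => ?_
        rw [h2 U]
        congr 1
        simp [Finset.subset_compl_comm]
    _ = ∑ U ∈ Tᶜ.powerset, ((-1:ℝ)) ^ U.card := by
        rw [← Finset.sum_filter]
        apply Finset.sum_congr _ (fun _ _ => rfl)
        ext U
        simp [Finset.mem_powerset]
    _ = if T = univ then 1 else 0 := by
        have := Finset.sum_powerset_neg_one_pow_card (x := Tᶜ)
        have hcast : ∑ U ∈ Tᶜ.powerset, ((-1:ℝ)) ^ U.card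
            = ((∑ U ∈ Tᶜ.powerset, ((-1:ℤ)) ^ U.card : ℤ) : ℝ) := by push_cast; rfl
        rw [hcast, this]
        by_cases h : T = univ <;> simp [h, Finset.compl_eq_empty_iff]

lemma aux_polarization (k : ℕ) (z : Fin k → ℝ) :
    (k.factorial : ℝ) * ∏ j, z j
      = ∑ S ∈ (univ : Finset (Fin k)).powerset,
          ((-1 : ℝ)) ^ (k - S.card) * (∑ j ∈ S, z j) ^ k := by
  have expand : ∀ S : Finset (Fin k),
      (∑ j ∈ S, z j) ^ k = ∑ p : Fin k → Fin k,
        (if ∀ i, p i ∈ S then ∏ i, z (p i) else 0) := by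
    intro S
    have h1 : (∑ j ∈ S, z j) ^ k = ∏ _i : Fin k, (∑ j ∈ S, z j) := by
      rw [Finset.prod_const, Finset.card_univ, Fintype.card_fin]
    rw [h1, Finset.prod_univ_sum]
    rw [← Finset.sum_filter]
    apply Finset.sum_congr _ (fun _ _ => rfl)
    ext p
    simp [Fintype.mem_piFinset]
  symm
  calc ∑ S ∈ (univ : Finset (Fin k)).powerset,
          ((-1 : ℝ)) ^ (k - S.card) * (∑ j ∈ S, z j) ^ k
      = ∑ S ∈ (univ : Finset (Fin k)).powerset, ∑ p : Fin k → Fin k,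
          (if Finset.image p univ ⊆ S then ((-1:ℝ)) ^ (k - S.card) * ∏ i, z (p i) else 0) := by
        refine Finset.sum_congr rfl fun S _ => ?_
        rw [expand S, Finset.mul_sum]
        refine Finset.sum_congr rfl fun p _ => ?_
        rw [mul_ite, mul_zero]
        congr 1
        simp [Finset.image_subset_iff]
    _ = ∑ p : Fin k → Fin k, ∑ S ∈ (univ : Finset (Fin k)).powerset,
          (if Finset.image p univ ⊆ S then ((-1:ℝ)) ^ (k - S.card) else 0) * ∏ i, z (p i) := by
        rw [Finset.sum_comm]
        refine Finset.sum_congr rfl fun p _ => Finset.sum_congr rfl fun S _ => ?_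
        rw [ite_mul, zero_mul]
    _ = ∑ p : Fin k → Fin k,
          (if Finset.image p univ = univ then (1:ℝ) else 0) * ∏ i, z (p i) := by
        refine Finset.sum_congr rfl fun p _ => ?_
        rw [← Finset.sum_mul, aux_superset_sum]
    _ = ∑ p ∈ Finset.univ.filter (fun p : Fin k → Fin k => Finset.image p univ = univ),
          ∏ i, z (p i) := by
        rw [Finset.sum_filter]
        refine Finset.sum_congr rfl fun p _ => ?_
        rw [ite_mul, one_mul, zero_mul]
    _ = ∑ σ : Equiv.Perm (Fin k), ∏ i, z (σ i) := by
        have hbij : ∀ p : Fin k → Fin k, Finset.image p univ = univ → Function.Bijective p := by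
          intro p hp
          rw [Fintype.bijective_iff_surjective_and_card]
          refine ⟨fun y => ?_, rfl⟩
          have : y ∈ Finset.image p univ := by rw [hp]; exact Finset.mem_univ y
          obtain ⟨x, -, hx⟩ := Finset.mem_image.1 this
          exact ⟨x, hx⟩
        refine Finset.sum_bij'
          (fun p hp => Equiv.ofBijective p (hbij p (Finset.mem_filter.1 hp).2))
          (fun σ _ => ⇑σ) (fun _ _ => Finset.mem_univ _) ?_ ?_ ?_ ?_
        · intro σ _
          refine Finset.mem_filter.2 ⟨Finset.mem_univ _, ?_⟩
          ext y
          simp [σ.surjective y]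
        · intro p hp; rfl
        · intro σ _; ext x; rfl
        · intro p hp; rfl
    _ = (k.factorial : ℝ) * ∏ j, z j := by
        rw [Finset.sum_congr rfl (fun σ _ => Equiv.prod_comp σ z)]
        rw [Finset.sum_const, Finset.card_univ, Fintype.card_perm, Fintype.card_fin,
          nsmul_eq_mul]


/-- **Monomials as combinations of powers of linear forms.** Every monomial
`x ↦ x₁^{k₁} ⋯ x_N^{k_N}` of total degree `k` on `ℝ^N` lies in the real
linear span of the `k`-th powers of linear forms `x ↦ (a·x)^k`, `a ∈ ℝ^N`. -/
theorem monomial_mem_span_powers_of_linear_forms (N : ℕ) (hN : 0 < N) (k : ℕ)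
    (kv : Fin N → ℕ) (hkv : ∑ i, kv i = k) :
    (fun x : Fin N → ℝ => ∏ i, x i ^ kv i) ∈
      Submodule.span ℝ
        {f : (Fin N → ℝ) → ℝ |
          ∃ a : Fin N → ℝ, f = fun x => (∑ i, a i * x i) ^ k} := by
  classical
  -- a map `m : Fin k → Fin N` whose fiber over `i` has `kv i` elements
  have hcard : Fintype.card (Σ i : Fin N, Fin (kv i)) = Fintype.card (Fin k) := by
    simp [Fintype.card_sigma, hkv]
  let e : (Σ i : Fin N, Fin (kv i)) ≃ Fin k := Fintype.equivOfCardEq hcard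
  let m : Fin k → Fin N := fun j => (e.symm j).1
  have hmono : ∀ x : Fin N → ℝ, ∏ i, x i ^ kv i = ∏ j, x (m j) := by
    intro x
    have h1 : ∏ j, x (m j) = ∏ σ : Σ i : Fin N, Fin (kv i), x (m (e σ)) :=
      (Equiv.prod_comp e _).symm
    have h2 : ∀ σ : Σ i : Fin N, Fin (kv i), x (m (e σ)) = x σ.1 := fun σ => by simp [m, e]
    rw [h1, Finset.prod_congr rfl (fun σ _ => h2 σ), ← Finset.univ_sigma_univ,
      Finset.prod_sigma]
    simp [Finset.prod_const]
  -- the key decomposition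
  have key : (fun x : Fin N → ℝ => ∏ i, x i ^ kv i)
      = ∑ S ∈ (Finset.univ : Finset (Fin k)).powerset,
          ((k.factorial : ℝ)⁻¹ * ((-1 : ℝ)) ^ (k - S.card)) •
            (fun x : Fin N → ℝ => (∑ j ∈ S, x (m j)) ^ k) := by
    funext x
    rw [Finset.sum_apply]
    have hpol := aux_polarization k (fun j => x (m j))
    have hfac : (k.factorial : ℝ) ≠ 0 := Nat.cast_ne_zero.2 k.factorial_ne_zero
    calc ∏ i, x i ^ kv i = ∏ j, x (m j) := hmono x
      _ = (k.factorial : ℝ)⁻¹ * ((k.factorial : ℝ) * ∏ j, x (m j)) := by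
          field_simp
      _ = ∑ S ∈ (Finset.univ : Finset (Fin k)).powerset,
            ((k.factorial : ℝ)⁻¹ * ((-1 : ℝ)) ^ (k - S.card)) •
              ((∑ j ∈ S, x (m j)) ^ k) := by
          rw [hpol, Finset.mul_sum]
          refine Finset.sum_congr rfl fun S _ => ?_
          simp [smul_eq_mul]; ring
      _ = _ := rfl
  rw [key]
  refine Submodule.sum_mem _ fun S _ => Submodule.smul_mem _ _ (Submodule.subset_span ?_)
  refine ⟨fun i => ((S.filter fun j => m j = i).card : ℝ), ?_⟩
  funext x
  congr 1
  have := Finset.sum_fiberwise' S m (fun i => x i)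
  rw [← this]
  refine Finset.sum_congr rfl fun i _ => ?_
  rw [Finset.sum_const, nsmul_eq_mul]
end

section
/- Density of powers of linear forms: For every positive integer N and every compact set K ⊆ ℝ^N, the real linear span of the set of functions { x ↦ (a_1 x_1 + ⋯ + a_N x_N)^k : (a_1, …, a_N) ∈ ℝ^N, k ∈ ℕ } is dense in the space C(K, ℝ) of continuous real-valued functions on K with the supremum norm: for every continuous g : K → ℝ and every ε > 0 there exist finitely many pairs (a^{(i)}, k_i) and real coefficients c_i with sup_{x ∈ K} |g(x) − ∑_i c_i (a^{(i)}·x)^{k_i}| < ε. -/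
open Submodule

/-- Vandermonde trick: if a "polynomial in `t` with vector coefficients" lies in a
submodule for all real `t`, then each coefficient does. -/
lemma vandermonde_mem_span {M : Type*} [AddCommGroup M] [Module ℝ M]
    (p : Submodule ℝ M) (n : ℕ) (v : Fin (n + 1) → M)
    (h : ∀ t : ℝ, ∑ j : Fin (n + 1), (t ^ (j : ℕ)) • v j ∈ p) :
    ∀ j, v j ∈ p := by
  intro j
  set t : Fin (n + 1) → ℝ := fun i => (i : ℕ)
  set B : Matrix (Fin (n + 1)) (Fin (n + 1)) ℝ := Matrix.vandermonde t with hB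
  have hdet : B.det ≠ 0 := by
    rw [hB, Matrix.det_vandermonde]
    refine Finset.prod_ne_zero_iff.2 fun i _ => Finset.prod_ne_zero_iff.2 fun k hk => ?_
    have hik : i < k := by simpa using hk
    have : t i < t k := by
      show ((i : ℕ) : ℝ) < ((k : ℕ) : ℝ)
      exact_mod_cast hik
    exact sub_ne_zero.2 (ne_of_gt this)
  have hinv : B⁻¹ * B = 1 := Matrix.nonsing_inv_mul B (isUnit_iff_ne_zero.2 hdet)
  have key : v j = ∑ i : Fin (n + 1), (B⁻¹ j i) • (∑ k : Fin (n + 1), (t i ^ (k : ℕ)) • v k) := by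
    simp_rw [Finset.smul_sum, smul_smul]
    rw [Finset.sum_comm]
    have : ∀ k : Fin (n + 1), ∑ i : Fin (n + 1), (B⁻¹ j i * t i ^ (k : ℕ)) • v k
        = ((B⁻¹ * B) j k) • v k := by
      intro k
      rw [Matrix.mul_apply, Finset.sum_smul]
      simp [hB, Matrix.vandermonde_apply]
    rw [Finset.sum_congr rfl fun k _ => this k]
    rw [hinv]
    simp [Matrix.one_apply, Finset.sum_ite_eq' Finset.univ j]
  rw [key]
  exact sum_mem fun i _ => smul_mem _ _ (h (t i))

set_option maxHeartbeats 1000000 in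
/-- **Density of powers of linear forms.** On any compact `K ⊆ ℝ^N`, every
continuous function can be uniformly approximated, to arbitrary accuracy, by
finite real linear combinations of powers of linear forms `x ↦ (a·x)^k`. -/
theorem dense_span_powers_of_linear_forms (N : ℕ) (hN : 0 < N)
    (K : Set (Fin N → ℝ)) (hK : IsCompact K)
    (g : (Fin N → ℝ) → ℝ) (hg : ContinuousOn g K) :
    ∀ ε > 0, ∃ (m : ℕ) (a : Fin m → Fin N → ℝ) (kk : Fin m → ℕ) (c : Fin m → ℝ),
      ∀ x ∈ K, |g x - ∑ i, c i * (∑ j, a i j * x j) ^ kk i| < ε := by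
  intro ε hε
  haveI : CompactSpace K := isCompact_iff_compactSpace.mp hK
  -- the linear form `a · x` as a continuous map on `K`
  let ℓ : (Fin N → ℝ) → C(K, ℝ) := fun a =>
    ⟨fun x => ∑ j, a j * (x : Fin N → ℝ) j, by
      apply continuous_finset_sum
      intro j _
      exact (continuous_const.mul ((continuous_apply j).comp continuous_subtype_val))⟩
  let S : Set C(K, ℝ) := {f | ∃ a k, f = (ℓ a) ^ k}
  -- linearity of `ℓ`
  have hℓ : ∀ a b : Fin N → ℝ, ∀ t : ℝ, ℓ (a + t • b) = ℓ a + t • ℓ b := by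
    intro a b t
    ext x
    simp [ℓ, Finset.sum_add_distrib, Finset.mul_sum, add_mul, mul_assoc]
  -- key: product of two powers of linear forms is in the span
  have key : ∀ (a b : Fin N → ℝ) (p q : ℕ), (ℓ a) ^ p * (ℓ b) ^ q ∈ span ℝ S := by
    intro a b p q
    set n := p + q with hn
    have main : ∀ t : ℝ, ∑ j : Fin (n + 1),
        (t ^ (j : ℕ)) • ((n.choose (j : ℕ) : ℝ) • ((ℓ b) ^ (j : ℕ) * (ℓ a) ^ (n - (j : ℕ))))
          ∈ span ℝ S := by
      intro t
      have expand : (ℓ (a + t • b)) ^ n = ∑ j : Fin (n + 1),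
          (t ^ (j : ℕ)) • ((n.choose (j : ℕ) : ℝ) • ((ℓ b) ^ (j : ℕ) * (ℓ a) ^ (n - (j : ℕ)))) := by
        rw [hℓ a b t, add_comm (ℓ a) (t • ℓ b), add_pow]
        rw [← Fin.sum_univ_eq_sum_range
          (fun k => (t • ℓ b) ^ k * (ℓ a) ^ (n - k) * ((n.choose k : ℕ) : C(K, ℝ)))]
        refine Finset.sum_congr rfl fun j _ => ?_
        rw [smul_pow]
        ext x
        simp [mul_comm, mul_assoc, mul_left_comm]
      rw [← expand]
      exact subset_span ⟨a + t • b, n, rfl⟩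
    have := vandermonde_mem_span (span ℝ S) n _ main
    have hq : ((n.choose q : ℝ))⁻¹ • ((n.choose q : ℝ) • ((ℓ b) ^ q * (ℓ a) ^ (n - q)))
        ∈ span ℝ S := by
      refine smul_mem _ _ ?_
      have := this ⟨q, by omega⟩
      simpa using this
    have hch : (n.choose q : ℝ) ≠ 0 := by
      have : 0 < n.choose q := Nat.choose_pos (by omega)
      positivity
    rw [inv_smul_smul₀ hch] at hq
    have hnq : n - q = p := by omega
    rw [hnq] at hq
    rw [mul_comm]
    exact hq
  -- span S is closed under multiplication
  have mulmem : ∀ f ∈ span ℝ S, ∀ h ∈ span ℝ S, f * h ∈ span ℝ S := by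
    intro f hf
    induction hf using span_induction with
    | mem f hfS =>
      intro h hh
      induction hh using span_induction with
      | mem h hhS =>
        obtain ⟨a, k, rfl⟩ := hfS
        obtain ⟨b, l, rfl⟩ := hhS
        exact key a b k l
      | zero => simpa using zero_mem (span ℝ S)
      | add u v _ _ hu hv => rw [mul_add]; exact add_mem hu hv
      | smul c u _ hu => rw [mul_smul_comm]; exact smul_mem _ _ hu
    | zero => intro h hh; simpa using zero_mem (span ℝ S)
    | add u v _ _ hu hv => intro h hh; rw [add_mul]; exact add_mem (hu h hh) (hv h hh)
    | smul c u _ hu => intro h hh; rw [smul_mul_assoc]; exact smul_mem _ _ (hu h hh)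
  -- hence the subalgebra generated by S equals its span (as sets)
  have onemem : (1 : C(K, ℝ)) ∈ S := ⟨0, 0, by simp⟩
  have hadj : Subalgebra.toSubmodule (Algebra.adjoin ℝ S) = span ℝ S := by
    apply Algebra.adjoin_eq_span_of_subset
    intro f hf
    induction hf using Submonoid.closure_induction with
    | mem f hfS => exact subset_span hfS
    | one => exact subset_span onemem
    | mul u v _ _ hu hv => exact mulmem u hu v hv
  -- the subalgebra separates points
  have hsep : (Algebra.adjoin ℝ S).SeparatesPoints := by
    intro x y hxy
    have : ∃ j, (x : Fin N → ℝ) j ≠ (y : Fin N → ℝ) j := by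
      by_contra hcon
      push_neg at hcon
      exact hxy (Subtype.ext (funext hcon))
    obtain ⟨j, hj⟩ := this
    refine ⟨_, ⟨(ℓ (Pi.single j 1)) ^ 1, Algebra.subset_adjoin ⟨Pi.single j 1, 1, rfl⟩, rfl⟩, ?_⟩
    simp only [pow_one]
    have hval : ∀ z : K, (ℓ (Pi.single j 1)) z = (z : Fin N → ℝ) j := by
      intro z
      simp [ℓ, Pi.single_apply]
    rw [hval, hval]
    exact hj
  -- Stone–Weierstrass
  obtain ⟨⟨φ, hφA⟩, hφ⟩ := ContinuousMap.exists_mem_subalgebra_near_continuous_of_separatesPoints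
    (Algebra.adjoin ℝ S) hsep (fun x : K => g x) (ContinuousOn.restrict hg) ε hε
  have hφspan : φ ∈ span ℝ S := by
    rw [← hadj] at *
    exact hφA
  obtain ⟨m, c, s, hsum⟩ := mem_span_set'.mp hφspan
  choose a kk hak using fun i => (s i).2
  refine ⟨m, a, kk, c, fun x hx => ?_⟩
  have hφx : φ ⟨x, hx⟩ = ∑ i, c i * (∑ j, a i j * x j) ^ kk i := by
    rw [← hsum]
    have : ∀ i, ((s i : C(K, ℝ)) : K → ℝ) ⟨x, hx⟩ = (∑ j, a i j * x j) ^ kk i := by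
      intro i
      rw [hak i]
      simp [ℓ]
    simp only [ContinuousMap.coe_sum, Finset.sum_apply, ContinuousMap.coe_smul, Pi.smul_apply,
      smul_eq_mul]
    exact Finset.sum_congr rfl fun i _ => by rw [this i]
  rw [← hφx]
  have := hφ ⟨x, hx⟩
  rw [Real.norm_eq_abs] at this
  rw [abs_sub_comm]
  exact this
end

section
/- Universality of single-hidden-layer networks with the Cauchy activation function: Define, for real parameters λ₁, λ₂ and d ≠ 0, the Cauchy activation function φ_{λ₁,λ₂,d} : ℝ → ℝ by φ_{λ₁,λ₂,d}(t) = λ₁·t/(t² + d²) + λ₂/(t² + d²). Then for every positive integer N, every compact set K ⊆ ℝ^N, every continuous function g : K → ℝ, and every ε > 0, there exist a natural number m ≥ 1, parameters λ₁^{(k)}, λ₂^{(k)} ∈ ℝ, d_k ∈ ℝ with d_k ≠ 0, weight vectors a^{(k)} ∈ ℝ^N, biases b_k ∈ ℝ, and real output coefficients c_k, for k = 1, …, m, such that sup_{x ∈ K} |g(x) − ∑_{k=1}^m c_k · φ_{λ₁^{(k)}, λ₂^{(k)}, d_k}(a^{(k)}·x + b_k)| < ε. -/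
/-!
On a compact `X ⊆ ℝ`, the closed linear span of the Cauchy activations is a subalgebra of
`C(X, ℝ)`. By partial fractions, `φ_{λ₁,λ₂,d} · φ_{λ₁',λ₂',d'}` is a sum of one activation with
parameter `d` and one with parameter `d'` as soon as `d² ≠ d'²`; the case `d² = d'²` is a uniform
limit of such products, and `1 = lim_{d → ∞} d² / (t² + d²)`. Since `t / (t² + 1)` and
`1 / (t² + 1)` separate points, Stone–Weierstrass makes this span dense.

On a compact `K` in a space whose continuous dual separates points, composing with a functional
`ℓ` shows that the closed span of the ridge functions `x ↦ σ (ℓ x)` contains every `exp ∘ ℓ`.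
These exponentials are closed under multiplication and separate points, so Stone–Weierstrass
applies once more.
-/

/-- The Cauchy activation function
`φ_{λ₁,λ₂,d}(t) = λ₁·t/(t² + d²) + λ₂/(t² + d²)`. -/
noncomputable def cauchyActivation (l1 l2 d : ℝ) (t : ℝ) : ℝ :=
  l1 * t / (t ^ 2 + d ^ 2) + l2 / (t ^ 2 + d ^ 2)

open Submodule Topology

theorem Continuous.apply_mem_closure_of_forall_ne {α Y : Type*} [TopologicalSpace α]
    [TopologicalSpace Y] {x : α} [(𝓝[≠] x).NeBot] {f : α → Y} {S : Set Y}
    (hf : Continuous f) (hS : ∀ s ≠ x, f s ∈ S) : f x ∈ closure S :=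
  closure_mono (Set.image_subset_iff.2 hS) <|
    (hf.continuousWithinAt (s := {x}ᶜ)).mem_closure_image
      (by rw [closure_compl_singleton]; trivial)

theorem Submodule.mul_mem_topologicalClosure_span {R A : Type*} [CommSemiring R] [Semiring A]
    [Algebra R A] [TopologicalSpace A] [ContinuousAdd A] [ContinuousMul A]
    [ContinuousConstSMul R A] {s : Set A}
    (hs : ∀ a ∈ s, ∀ b ∈ s, a * b ∈ (span R s).topologicalClosure) {x y : A}
    (hx : x ∈ (span R s).topologicalClosure) (hy : y ∈ (span R s).topologicalClosure) :
    x * y ∈ (span R s).topologicalClosure := by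
  have hspan : span R s * span R s ≤ (span R s).topologicalClosure := by
    rw [span_mul_span, span_le]
    rintro _ ⟨a, ha, b, hb, rfl⟩
    exact hs a ha b hb
  rw [← SetLike.mem_coe, topologicalClosure_coe] at hx hy
  have hxy := map_mem_closure₂ (u := ((span R s).topologicalClosure : Set A)) continuous_mul hx hy
    fun a ha b hb => hspan (mul_mem_mul ha hb)
  rwa [(span R s).isClosed_topologicalClosure.closure_eq] at hxy

theorem ContinuousMap.span_topologicalClosure_eq_top_of_separatesPoints {X : Type*}
    [TopologicalSpace X] [CompactSpace X] {s : Set C(X, ℝ)}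
    (h_one : 1 ∈ (span ℝ s).topologicalClosure)
    (h_mul : ∀ f ∈ s, ∀ g ∈ s, f * g ∈ (span ℝ s).topologicalClosure)
    (h_sep : ∀ x y, x ≠ y → ∃ f ∈ s, f x ≠ f y) :
    (span ℝ s).topologicalClosure = ⊤ := by
  set A := (span ℝ s).topologicalClosure.toSubalgebra h_one
    fun _ _ => mul_mem_topologicalClosure_span h_mul
  have hA : A.SeparatesPoints := fun x y hxy => by
    obtain ⟨f, hf, hfxy⟩ := h_sep x y hxy
    exact ⟨f, ⟨f, le_topologicalClosure _ (subset_span hf), rfl⟩, hfxy⟩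
  have hclosed : A.topologicalClosure = A :=
    le_antisymm (Subalgebra.topologicalClosure_minimal le_rfl (isClosed_topologicalClosure _))
      A.le_topologicalClosure
  have hA_top : A = ⊤ :=
    hclosed.symm.trans (subalgebra_topologicalClosure_eq_top_of_separatesPoints A hA)
  exact eq_top_iff.2 fun f _ => (hA_top ▸ Algebra.mem_top : f ∈ A)

theorem Continuous.cauchyActivation {α : Type*} [TopologicalSpace α] (l1 l2 : ℝ) {d t : α → ℝ}
    (hd : Continuous d) (ht : Continuous t) (hd0 : ∀ x, d x ≠ 0) :
    Continuous fun x => cauchyActivation l1 l2 (d x) (t x) := by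
  have h : ∀ x, t x ^ 2 + d x ^ 2 ≠ 0 := fun x => by have := hd0 x; positivity
  unfold _root_.cauchyActivation
  fun_prop (disch := exact h)

theorem cauchyActivation_mul_cauchyActivation (l1 l2 l1' l2' : ℝ) {d d' : ℝ} (hd : d ≠ 0)
    (hd' : d' ≠ 0) (hdd' : d ^ 2 ≠ d' ^ 2) (t : ℝ) :
    cauchyActivation l1 l2 d t * cauchyActivation l1' l2' d' t =
      cauchyActivation ((l1 * l2' + l2 * l1') / (d' ^ 2 - d ^ 2))
          ((l2 * l2' - d ^ 2 * l1 * l1') / (d' ^ 2 - d ^ 2)) d t +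
        cauchyActivation (-((l1 * l2' + l2 * l1') / (d' ^ 2 - d ^ 2)))
          ((d' ^ 2 * l1 * l1' - l2 * l2') / (d' ^ 2 - d ^ 2)) d' t := by
  have : d' ^ 2 - d ^ 2 ≠ 0 := sub_ne_zero.2 hdd'.symm
  have : t ^ 2 + d ^ 2 ≠ 0 := by positivity
  have : t ^ 2 + d' ^ 2 ≠ 0 := by positivity
  unfold cauchyActivation
  field_simp
  ring

theorem injective_cauchyActivation_pair :
    Function.Injective fun t => (cauchyActivation 1 0 1 t, cauchyActivation 0 1 1 t) := by
  intro x y hxy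
  obtain ⟨h₁, h₂⟩ := Prod.ext_iff.1 hxy
  simp only [cauchyActivation, zero_mul, zero_div, add_zero, one_mul, one_pow, zero_add,
    one_div] at h₁ h₂
  rw [inv_inj] at h₂
  rw [h₂] at h₁
  have : y ^ 2 + 1 ≠ 0 := by positivity
  field_simp at h₁
  exact h₁

def cauchyActivations : Set (ℝ → ℝ) :=
  {σ | ∃ l1 l2 d, d ≠ 0 ∧ σ = cauchyActivation l1 l2 d}

def activationSpan (X : Set ℝ) (G : Set (ℝ → ℝ)) : Submodule ℝ C(X, ℝ) :=
  span ℝ {f | ∃ σ ∈ G, ∀ t, f t = σ t}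

noncomputable def cauchyOn (X : Set ℝ) (l1 l2 : ℝ) {d : ℝ} (hd : d ≠ 0) : C(X, ℝ) :=
  ⟨fun t => cauchyActivation l1 l2 d t,
    continuous_const.cauchyActivation l1 l2 continuous_subtype_val fun _ => hd⟩

section OneDimensional

variable (X : Set ℝ)

theorem cauchyOn_mem_activationSpan (l1 l2 : ℝ) {d : ℝ} (hd : d ≠ 0) :
    cauchyOn X l1 l2 hd ∈ activationSpan X cauchyActivations :=
  subset_span ⟨_, ⟨l1, l2, d, hd, rfl⟩, fun _ => rfl⟩

theorem one_mem_topologicalClosure_activationSpan_cauchy :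
    1 ∈ (activationSpan X cauchyActivations).topologicalClosure := by
  -- `(1 + (s t)²)⁻¹ = φ_{0, s⁻², s⁻¹}(t)` for `s ≠ 0`, and it tends to `1` as `s → 0`
  let F : C(ℝ × X, ℝ) := ⟨fun p => (1 + (p.1 * p.2) ^ 2)⁻¹,
    (by fun_prop : Continuous fun p : ℝ × X => 1 + (p.1 * p.2) ^ 2).inv₀ fun _ => by positivity⟩
  have hF : ∀ s ≠ 0, F.curry s ∈ activationSpan X cauchyActivations := fun s hs => by
    convert cauchyOn_mem_activationSpan X 0 (s⁻¹ ^ 2) (inv_ne_zero hs) using 1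
    ext t
    simp only [ContinuousMap.curry_apply, ContinuousMap.coe_mk, F, cauchyOn, cauchyActivation]
    field_simp
    ring
  have hF0 : F.curry 0 = 1 := by ext; simp [F]
  rw [← hF0, ← SetLike.mem_coe, topologicalClosure_coe]
  exact F.curry.continuous.apply_mem_closure_of_forall_ne hF

theorem cauchyOn_mul_mem_topologicalClosure (l1 l2 l1' l2' : ℝ) {d d' : ℝ} (hd : d ≠ 0)
    (hd' : d' ≠ 0) : cauchyOn X l1 l2 hd * cauchyOn X l1' l2' hd' ∈
      (activationSpan X cauchyActivations).topologicalClosure := by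
  have h_ne : ∀ {d'} (hd' : d' ≠ 0), d ^ 2 ≠ d' ^ 2 →
      cauchyOn X l1 l2 hd * cauchyOn X l1' l2' hd' ∈ activationSpan X cauchyActivations := by
    intro d' hd' hdd'
    obtain ⟨α, β, γ, heq⟩ : ∃ α β γ, cauchyOn X l1 l2 hd * cauchyOn X l1' l2' hd' =
        cauchyOn X α β hd + cauchyOn X (-α) γ hd' :=
      ⟨_, _, _, ContinuousMap.ext fun t =>
        cauchyActivation_mul_cauchyActivation l1 l2 l1' l2' hd hd' hdd' t⟩
    rw [heq]
    exact Submodule.add_mem _ (cauchyOn_mem_activationSpan X α β hd)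
      (cauchyOn_mem_activationSpan X (-α) γ hd')
  by_cases hdd' : d ^ 2 = d' ^ 2
  · -- perturb `d'` to `d' * (1 + s ^ 2)`, whose square differs from `d ^ 2` when `s ≠ 0`
    have hd's : ∀ s : ℝ, d' * (1 + s ^ 2) ≠ 0 := fun s => by positivity
    let F : C(ℝ × X, ℝ) :=
      ⟨fun p => cauchyActivation l1 l2 d p.2 * cauchyActivation l1' l2' (d' * (1 + p.1 ^ 2)) p.2,
        (continuous_const.cauchyActivation l1 l2 (by fun_prop) fun _ => hd).mul
          (Continuous.cauchyActivation l1' l2' (by fun_prop) (by fun_prop) fun p => hd's p.1)⟩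
    have hF : ∀ s ≠ 0, F.curry s ∈ activationSpan X cauchyActivations := fun s hs => by
      refine h_ne (hd's s) ?_
      have : 0 < d' ^ 2 * s ^ 2 * (2 + s ^ 2) := by positivity
      rw [hdd']
      exact ne_of_lt (by linear_combination this)
    have hF0 : F.curry 0 = cauchyOn X l1 l2 hd * cauchyOn X l1' l2' hd' := by
      ext; simp [F, cauchyOn]
    rw [← hF0, ← SetLike.mem_coe, topologicalClosure_coe]
    exact F.curry.continuous.apply_mem_closure_of_forall_ne hF
  · exact le_topologicalClosure _ (h_ne hd' hdd')

theorem activationSpan_cauchy_topologicalClosure_eq_top (hX : IsCompact X) :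
    (activationSpan X cauchyActivations).topologicalClosure = ⊤ := by
  have := isCompact_iff_compactSpace.mp hX
  refine ContinuousMap.span_topologicalClosure_eq_top_of_separatesPoints
    (one_mem_topologicalClosure_activationSpan_cauchy X) ?_ ?_
  · rintro f ⟨_, ⟨l1, l2, d, hd, rfl⟩, hf⟩ g ⟨_, ⟨l1', l2', d', hd', rfl⟩, hg⟩
    obtain rfl : f = cauchyOn X l1 l2 hd := ContinuousMap.ext hf
    obtain rfl : g = cauchyOn X l1' l2' hd' := ContinuousMap.ext hg
    exact cauchyOn_mul_mem_topologicalClosure X l1 l2 l1' l2' hd hd'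
  · intro x y hxy
    by_contra! h
    exact hxy <| Subtype.ext <| injective_cauchyActivation_pair <| Prod.ext
      (h (cauchyOn X 1 0 one_ne_zero) ⟨_, ⟨1, 0, 1, one_ne_zero, rfl⟩, fun _ => rfl⟩)
      (h (cauchyOn X 0 1 one_ne_zero) ⟨_, ⟨0, 1, 1, one_ne_zero, rfl⟩, fun _ => rfl⟩)

end OneDimensional

section Ridge

variable {E : Type*} [AddCommGroup E] [Module ℝ E] [TopologicalSpace E]

def ridgeSpan (K : Set E) (G : Set (ℝ → ℝ)) : Submodule ℝ C(K, ℝ) :=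
  span ℝ {f | ∃ σ ∈ G, ∃ ℓ : StrongDual ℝ E, ∀ x, f x = σ (ℓ x)}

variable {K : Set E} {G : Set (ℝ → ℝ)}

theorem comp_mem_topologicalClosure_ridgeSpan (hK : IsCompact K)
    (hG : ∀ X : Set ℝ, IsCompact X → (activationSpan X G).topologicalClosure = ⊤)
    (h : C(ℝ, ℝ)) (ℓ : StrongDual ℝ E) :
    (h.comp ℓ).restrict K ∈ (ridgeSpan K G).topologicalClosure := by
  let π : C(K, ℓ '' K) := ⟨fun x => ⟨ℓ x, Set.mem_image_of_mem ℓ x.2⟩, by fun_prop⟩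
  let Φ := ContinuousMap.compRightAlgHom ℝ ℝ π
  have hΦ : (activationSpan (ℓ '' K) G).map Φ.toLinearMap ≤ ridgeSpan K G := by
    refine (map_span_le _ _ _).2 ?_
    rintro f ⟨σ, hσ, hf⟩
    exact subset_span ⟨σ, hσ, ℓ, fun x => hf (π x)⟩
  have hh : h.restrict (ℓ '' K) ∈ closure (activationSpan (ℓ '' K) G : Set C(ℓ '' K, ℝ)) := by
    rw [← topologicalClosure_coe, hG _ (hK.image ℓ.continuous)]
    trivial
  rw [← SetLike.mem_coe, topologicalClosure_coe]
  exact map_mem_closure (f := Φ) (ContinuousMap.compRightAlgHom_continuous ℝ ℝ π) hh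
    fun f hf => hΦ (mem_map_of_mem hf)

theorem ridgeSpan_topologicalClosure_eq_top [SeparatingDual ℝ E] (hK : IsCompact K)
    (hG : ∀ X : Set ℝ, IsCompact X → (activationSpan X G).topologicalClosure = ⊤) :
    (ridgeSpan K G).topologicalClosure = ⊤ := by
  have := isCompact_iff_compactSpace.mp hK
  set s : Set C(K, ℝ) := {f | ∃ ℓ : StrongDual ℝ E, ∀ x, f x = Real.exp (ℓ x)}
  have hs : (span ℝ s).topologicalClosure = ⊤ := by
    refine ContinuousMap.span_topologicalClosure_eq_top_of_separatesPoints
      (le_topologicalClosure _ (subset_span ⟨0, by simp⟩)) ?_ ?_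
    · rintro f ⟨ℓ, hf⟩ g ⟨ℓ', hg⟩
      exact le_topologicalClosure _
        (subset_span ⟨ℓ + ℓ', fun x => by simp [hf, hg, Real.exp_add]⟩)
    · intro x y hxy
      obtain ⟨ℓ, hℓ⟩ :=
        SeparatingDual.exists_separating_of_ne (R := ℝ) (Subtype.coe_injective.ne hxy)
      exact ⟨⟨fun x => Real.exp (ℓ x), by fun_prop⟩, ⟨ℓ, fun _ => rfl⟩,
        fun h => hℓ (Real.exp_injective h)⟩
  refine eq_top_iff.2 (hs ▸ topologicalClosure_minimal _ (span_le.2 ?_)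
    (isClosed_topologicalClosure _))
  rintro f ⟨ℓ, hf⟩
  obtain rfl : f = ((⟨Real.exp, Real.continuous_exp⟩ : C(ℝ, ℝ)).comp ℓ).restrict K :=
    ContinuousMap.ext hf
  exact comp_mem_topologicalClosure_ridgeSpan hK hG _ ℓ

end Ridge

theorem Submodule.exists_fin_succ_sum_eq_of_mem_span {R M : Type*} [Semiring R]
    [AddCommMonoid M] [Module R M] {s : Set M} (hs : s.Nonempty) {x : M} (hx : x ∈ span R s) :
    ∃ (n : ℕ) (c : Fin (n + 1) → R) (v : Fin (n + 1) → s), ∑ i, c i • (v i : M) = x := by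
  obtain ⟨n, c, v, rfl⟩ := mem_span_set'.1 hx
  obtain ⟨y, hy⟩ := hs
  exact ⟨n, Fin.cons 0 c, Fin.cons ⟨y, hy⟩ v, by simp [Fin.sum_univ_succ]⟩

theorem StrongDual.apply_eq_sum_mul_single {N : ℕ} (ℓ : StrongDual ℝ (Fin N → ℝ))
    (x : Fin N → ℝ) : ℓ x = ∑ j, ℓ (Pi.single j 1) * x j := by
  refine (ℓ.toLinearMap.pi_apply_eq_sum_univ x).trans (Finset.sum_congr rfl fun j _ => ?_)
  rw [smul_eq_mul, mul_comm]
  exact congrArg (· * x j) (congrArg ℓ (funext fun j' => by simp [Pi.single_apply, eq_comm]))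

theorem exists_cauchy_network_eq_of_mem_ridgeSpan {N : ℕ} {K : Set (Fin N → ℝ)}
    {f : C(K, ℝ)} (hf : f ∈ ridgeSpan K cauchyActivations) :
    ∃ m : ℕ, 1 ≤ m ∧ ∃ (l1 l2 d : Fin m → ℝ) (a : Fin m → Fin N → ℝ) (b c : Fin m → ℝ),
      (∀ k, d k ≠ 0) ∧ ∀ x : K, f x = ∑ k, c k *
        cauchyActivation (l1 k) (l2 k) (d k) ((∑ j, a k j * (x : Fin N → ℝ) j) + b k) := by
  obtain ⟨n, c, v, rfl⟩ := exists_fin_succ_sum_eq_of_mem_span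
    (by exact ⟨0, _, ⟨0, 0, 1, one_ne_zero, rfl⟩, 0, fun x => by simp [cauchyActivation]⟩) hf
  choose σ hσ ℓ hv using fun i => (v i).2
  choose l1 l2 d hd hσ using hσ
  refine ⟨n + 1, n.succ_pos, l1, l2, d, fun k j => ℓ k (Pi.single j 1), 0, c, hd, fun x => ?_⟩
  simp only [ContinuousMap.coe_sum, ContinuousMap.coe_smul, Finset.sum_apply, Pi.smul_apply,
    smul_eq_mul, hv, hσ, Pi.zero_apply, add_zero, ← StrongDual.apply_eq_sum_mul_single]

theorem cauchy_network_universal_general (N : ℕ)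
    (K : Set (Fin N → ℝ)) (hK : IsCompact K)
    (g : (Fin N → ℝ) → ℝ) (hg : ContinuousOn g K) :
    ∀ ε > 0, ∃ m : ℕ, 1 ≤ m ∧
      ∃ (l1 l2 d : Fin m → ℝ) (a : Fin m → Fin N → ℝ) (b c : Fin m → ℝ),
        (∀ k, d k ≠ 0) ∧
        ∀ x ∈ K,
          |g x - ∑ k, c k *
            cauchyActivation (l1 k) (l2 k) (d k) ((∑ j, a k j * x j) + b k)| < ε := by
  intro ε hε
  have := isCompact_iff_compactSpace.mp hK
  have hdense : ⟨K.domRestrict g, hg.domRestrict⟩ ∈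
      closure (ridgeSpan K cauchyActivations : Set C(K, ℝ)) := by
    rw [← topologicalClosure_coe,
      ridgeSpan_topologicalClosure_eq_top hK activationSpan_cauchy_topologicalClosure_eq_top]
    trivial
  obtain ⟨f, hf, hfg⟩ := Metric.mem_closure_iff.1 hdense ε hε
  obtain ⟨m, hm, l1, l2, d, a, b, c, hd, hnet⟩ := exists_cauchy_network_eq_of_mem_ridgeSpan hf
  refine ⟨m, hm, l1, l2, d, a, b, c, hd, fun x hx => ?_⟩
  rw [← hnet ⟨x, hx⟩]
  exact (ContinuousMap.dist_lt_iff hε).1 hfg ⟨x, hx⟩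

/-- **Universality of single-hidden-layer networks with the Cauchy activation
function.** Every continuous function on a compact `K ⊆ ℝ^N` can be uniformly
approximated by a single-hidden-layer network with Cauchy activations. -/
theorem cauchy_network_universal (N : ℕ) (hN : 0 < N)
    (K : Set (Fin N → ℝ)) (hK : IsCompact K)
    (g : (Fin N → ℝ) → ℝ) (hg : ContinuousOn g K) :
    ∀ ε > 0, ∃ m : ℕ, 1 ≤ m ∧
      ∃ (l1 l2 d : Fin m → ℝ) (a : Fin m → Fin N → ℝ) (b c : Fin m → ℝ),
        (∀ k, d k ≠ 0) ∧
        ∀ x ∈ K,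
          |g x - ∑ k, c k *
            cauchyActivation (l1 k) (l2 k) (d k) ((∑ j, a k j * x j) + b k)| < ε :=
  cauchy_network_universal_general N K hK g hg
end
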